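/- arXiv:1705.08335 — 2 statements merged into one kernel-verified Lean document; each statement's English description precedes it below -/
import Mathlib

section
/- If A carries the maximal prolongation of a first order differential calculus and (E, ∇_E, σ_E) is a left bimodule connection whose curvature R_E is a right A-module map, then (id⊗σ_E)(σ_E⊗id) maps E ⊗_A ker(∧) into ker(∧) ⊗_A E, so σ_E extends to E ⊗_A Ω² → Ω² ⊗_A E (and the connection is extendable). -/
/-!
For `f ∈ E` put `Ψ_f(η) = [(id⊗σ)(∇f ⊗ η)] − R(σ(f ⊗ η)) ∈ Ω²⊗_A E`, where `R = d⊗id − id∧∇`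
on `Ω¹⊗_A E`, so that `R_E = R ∘ ∇`. The bimodule rule `∇(fa) = σ(f⊗da) + (∇f)a` gives
`R(ψa) = R(ψ)a − [(id⊗σ)(ψ⊗da)]`, hence `[Φ(f ⊗ ξ ⊗ db)] = Ψ_f(ξb) − Ψ_f(ξ)b`, and right
linearity of `R_E` says exactly that `Ψ_f` kills exact forms. For a relation `a·db = dr·s`
therefore `[Φ(e ⊗ c(da⊗db + dr⊗ds)c')] = Ψ_{ec}(da·b + dr·s)c' = Ψ_{ec}(d(ab))c' = 0`.
-/

theorem AddMonoidHom.congr_fun_of_forall_tmul {X Y M N : Type*} [AddCommGroup M] [AddMonoid N]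
    (t : X → Y → M) (ht : ∀ m, m ∈ AddSubgroup.closure (Set.range fun p : X × Y => t p.1 p.2))
    (f g : M →+ N) (h : ∀ x y, f (t x y) = g (t x y)) (m : M) : f m = g m :=
  DFunLike.congr_fun (AddMonoidHom.eq_of_eqOn_dense (eq_top_iff.2 fun m _ => ht m)
    (by rintro _ ⟨⟨x, y⟩, rfl⟩; exact h x y)) m

section PhiPotential

-- `Q` stands for `Ω²⊗_A E` with right action `rQ`, `idσ ψ η` for `[(id⊗σ)(ψ⊗η)]`,
-- and `phiPotential nabE σ tensET idσ R f` for `Ψ_f`.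
variable {A Ω1 E TE ET Q : Type*} [Ring A] [AddCommGroup Ω1] [AddCommGroup E]
  [AddCommGroup TE] [AddCommGroup ET] [AddCommGroup Q]
  {rΩ : Ω1 →+ A →+ Ω1} {d0 : A →+ Ω1} {rE : E →+ A →+ E} {rTE : TE →+ A →+ TE}
  {nabE : E →+ TE} {σ : ET →+ TE} {tensET : E →+ Ω1 →+ ET}
  {idσ : TE →+ Ω1 →+ Q} {R : TE →+ Q} {rQ : Q →+ A →+ Q}

def phiPotential (nabE : E →+ TE) (σ : ET →+ TE) (tensET : E →+ Ω1 →+ ET)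
    (idσ : TE →+ Ω1 →+ Q) (R : TE →+ Q) (f : E) : Ω1 →+ Q :=
  idσ (nabE f) - R.comp (σ.comp (tensET f))

theorem sigma_tensET_d0 (hbiconn : ∀ f a, nabE (rE f a) = σ (tensET f (d0 a)) + rTE (nabE f) a)
    (f : E) (a : A) : σ (tensET f (d0 a)) = nabE (rE f a) - rTE (nabE f) a :=
  eq_sub_of_add_eq (hbiconn f a).symm

theorem phiPotential_d0
    (hbiconn : ∀ f a, nabE (rE f a) = σ (tensET f (d0 a)) + rTE (nabE f) a)
    (hR_rTE : ∀ ψ a, R (rTE ψ a) = rQ (R ψ) a - idσ ψ (d0 a))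
    (hR : ∀ f a, R (nabE (rE f a)) = rQ (R (nabE f)) a) (f : E) (t : A) :
    phiPotential nabE σ tensET idσ R f (d0 t) = 0 := by
  simp only [phiPotential, AddMonoidHom.sub_apply, AddMonoidHom.comp_apply,
    sigma_tensET_d0 hbiconn, map_sub, hR, hR_rTE]
  abel

theorem idσ_sigma_d0 (hσrmod : ∀ f ξ a, σ (tensET f (rΩ ξ a)) = rTE (σ (tensET f ξ)) a)
    (hR_rTE : ∀ ψ a, R (rTE ψ a) = rQ (R ψ) a - idσ ψ (d0 a))
    (hidσ : ∀ ψ ξ a, idσ ψ (rΩ ξ a) = rQ (idσ ψ ξ) a) (f : E) (ξ : Ω1) (b : A) :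
    idσ (σ (tensET f ξ)) (d0 b) = phiPotential nabE σ tensET idσ R f (rΩ ξ b)
      - rQ (phiPotential nabE σ tensET idσ R f ξ) b := by
  simp only [phiPotential, AddMonoidHom.sub_apply, AddMonoidHom.comp_apply, hσrmod, hR_rTE,
    hidσ, map_sub]
  abel

theorem sigma_tensET_smul_d0 [Module A Ω1] (hleib : ∀ a b, d0 (a * b) = a • d0 b + rΩ (d0 a) b)
    (hbiconn : ∀ f a, nabE (rE f a) = σ (tensET f (d0 a)) + rTE (nabE f) a)
    (hσrmod : ∀ f ξ a, σ (tensET f (rΩ ξ a)) = rTE (σ (tensET f ξ)) a)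
    (hrE_assoc : ∀ f a b, rE (rE f a) b = rE f (a * b))
    (hrTE_assoc : ∀ ψ a b, rTE (rTE ψ a) b = rTE ψ (a * b)) (e : E) (c t : A) :
    σ (tensET e (c • d0 t)) = σ (tensET (rE e c) (d0 t)) := by
  rw [eq_sub_of_add_eq (hleib c t).symm, map_sub, map_sub, hσrmod]
  simp only [sigma_tensET_d0 hbiconn, map_sub, AddMonoidHom.sub_apply, hrTE_assoc, hrE_assoc]
  abel

theorem idσ_sigma_smul_d0 [Module A Ω1] (hleib : ∀ a b, d0 (a * b) = a • d0 b + rΩ (d0 a) b)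
    (hbiconn : ∀ f a, nabE (rE f a) = σ (tensET f (d0 a)) + rTE (nabE f) a)
    (hσrmod : ∀ f ξ a, σ (tensET f (rΩ ξ a)) = rTE (σ (tensET f ξ)) a)
    (hrE_assoc : ∀ f a b, rE (rE f a) b = rE f (a * b))
    (hrTE_assoc : ∀ ψ a b, rTE (rTE ψ a) b = rTE ψ (a * b))
    (hR_rTE : ∀ ψ a, R (rTE ψ a) = rQ (R ψ) a - idσ ψ (d0 a))
    (hidσ : ∀ ψ ξ a, idσ ψ (rΩ ξ a) = rQ (idσ ψ ξ) a)
    (hR : ∀ f a, R (nabE (rE f a)) = rQ (R (nabE f)) a) (e : E) (c t u c' : A) :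
    idσ (σ (tensET e (c • d0 t))) (rΩ (d0 u) c')
      = rQ (phiPotential nabE σ tensET idσ R (rE e c) (rΩ (d0 t) u)) c' := by
  rw [sigma_tensET_smul_d0 hleib hbiconn hσrmod hrE_assoc hrTE_assoc, hidσ,
    idσ_sigma_d0 hσrmod hR_rTE hidσ, phiPotential_d0 hbiconn hR_rTE hR, map_zero,
    AddMonoidHom.zero_apply, sub_zero]

theorem sum_idσ_sigma_eq_zero [Module A Ω1] (hleib : ∀ a b, d0 (a * b) = a • d0 b + rΩ (d0 a) b)
    (hbiconn : ∀ f a, nabE (rE f a) = σ (tensET f (d0 a)) + rTE (nabE f) a)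
    (hσrmod : ∀ f ξ a, σ (tensET f (rΩ ξ a)) = rTE (σ (tensET f ξ)) a)
    (hrE_assoc : ∀ f a b, rE (rE f a) b = rE f (a * b))
    (hrTE_assoc : ∀ ψ a b, rTE (rTE ψ a) b = rTE ψ (a * b))
    (hR_rTE : ∀ ψ a, R (rTE ψ a) = rQ (R ψ) a - idσ ψ (d0 a))
    (hidσ : ∀ ψ ξ a, idσ ψ (rΩ ξ a) = rQ (idσ ψ ξ) a)
    (hR : ∀ f a, R (nabE (rE f a)) = rQ (R (nabE f)) a)
    {p q : ℕ} {a b : Fin p → A} {r s : Fin q → A}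
    (hrel : ∑ i, a i • d0 (b i) = ∑ j, rΩ (d0 (r j)) (s j)) (e : E) (c c' : A) :
    ∑ i, idσ (σ (tensET e (c • d0 (a i)))) (rΩ (d0 (b i)) c')
      + ∑ j, idσ (σ (tensET e (c • d0 (r j)))) (rΩ (d0 (s j)) c') = 0 := by
  have hsum : ∑ i, rΩ (d0 (a i)) (b i) + ∑ j, rΩ (d0 (r j)) (s j) = d0 (∑ i, a i * b i) := by
    rw [← hrel, ← Finset.sum_add_distrib, map_sum]
    exact Finset.sum_congr rfl fun i _ => by rw [hleib, add_comm]
  calc _ = rQ (phiPotential nabE σ tensET idσ R (rE e c)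
        (∑ i, rΩ (d0 (a i)) (b i) + ∑ j, rΩ (d0 (r j)) (s j))) c' := by
        simp only [idσ_sigma_smul_d0 hleib hbiconn hσrmod hrE_assoc hrTE_assoc hR_rTE hidσ hR,
          map_add, map_sum, AddMonoidHom.add_apply, AddMonoidHom.finsetSum_apply]
    _ = 0 := by
        rw [hsum, phiPotential_d0 hbiconn hR_rTE hR, map_zero, AddMonoidHom.zero_apply]

end PhiPotential

section TensorCompatibility

variable {A Ω1 E T11 TE ET T11E ET11 : Type*} [Ring A] [AddCommGroup Ω1] [AddCommGroup E]
  [AddCommGroup T11] [AddCommGroup TE] [AddCommGroup ET] [AddCommGroup T11E] [AddCommGroup ET11]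
  {rΩ : Ω1 →+ A →+ Ω1} {d0 : A →+ Ω1} {tens11 : Ω1 →+ Ω1 →+ T11} {rE : E →+ A →+ E}
  {tensTE : Ω1 →+ E →+ TE} {rTE : TE →+ A →+ TE} {tensET : E →+ Ω1 →+ ET}
  {nabE : E →+ TE} {σ : ET →+ TE} {jmap : T11 →+ E →+ T11E} {jlift : Ω1 → TE →+ T11E}
  {C : TE →+ Ω1 →+ T11E} {JK : AddSubgroup T11E} {rT2E : T11E ⧸ JK →+ A →+ T11E ⧸ JK}

theorem rTE_rTE
    (hTEspan : ∀ x : TE, x ∈ AddSubgroup.closure (Set.range fun p : Ω1 × E => tensTE p.1 p.2))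
    (hrTE : ∀ ξ e a, rTE (tensTE ξ e) a = tensTE ξ (rE e a))
    (hrE_assoc : ∀ e a b, rE (rE e a) b = rE e (a * b)) (ψ : TE) (a b : A) :
    rTE (rTE ψ a) b = rTE ψ (a * b) :=
  AddMonoidHom.congr_fun_of_forall_tmul (tensTE · ·) hTEspan ((rTE.flip b).comp (rTE.flip a))
    (rTE.flip (a * b)) (fun ξ e => by simp [hrTE, hrE_assoc]) ψ

theorem mk_jlift_rTE
    (hTEspan : ∀ x : TE, x ∈ AddSubgroup.closure (Set.range fun p : Ω1 × E => tensTE p.1 p.2))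
    (hjlift : ∀ ξ η e, jlift ξ (tensTE η e) = jmap (tens11 ξ η) e)
    (hrTE : ∀ ξ e a, rTE (tensTE ξ e) a = tensTE ξ (rE e a))
    (hrT2E : ∀ x e a, rT2E (QuotientAddGroup.mk' JK (jmap x e)) a
      = QuotientAddGroup.mk' JK (jmap x (rE e a)))
    (ξ : Ω1) (ψ : TE) (a : A) :
    QuotientAddGroup.mk' JK (jlift ξ (rTE ψ a))
      = rT2E (QuotientAddGroup.mk' JK (jlift ξ ψ)) a :=
  AddMonoidHom.congr_fun_of_forall_tmul (tensTE · ·) hTEspan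
    ((QuotientAddGroup.mk' JK).comp ((jlift ξ).comp (rTE.flip a)))
    ((rT2E.flip a).comp ((QuotientAddGroup.mk' JK).comp (jlift ξ)))
    (fun η e => by
      simp only [AddMonoidHom.comp_apply, AddMonoidHom.flip_apply, hrTE, hjlift, hrT2E]) ψ

theorem mk_C_rΩ
    (hTEspan : ∀ x : TE, x ∈ AddSubgroup.closure (Set.range fun p : Ω1 × E => tensTE p.1 p.2))
    (hjlift : ∀ ξ η e, jlift ξ (tensTE η e) = jmap (tens11 ξ η) e)
    (hrTE : ∀ ξ e a, rTE (tensTE ξ e) a = tensTE ξ (rE e a))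
    (hrT2E : ∀ x e a, rT2E (QuotientAddGroup.mk' JK (jmap x e)) a
      = QuotientAddGroup.mk' JK (jmap x (rE e a)))
    (hC : ∀ ξ e η, C (tensTE ξ e) η = jlift ξ (σ (tensET e η)))
    (hσrmod : ∀ e ξ a, σ (tensET e (rΩ ξ a)) = rTE (σ (tensET e ξ)) a)
    (ψ : TE) (η : Ω1) (a : A) :
    QuotientAddGroup.mk' JK (C ψ (rΩ η a)) = rT2E (QuotientAddGroup.mk' JK (C ψ η)) a :=
  AddMonoidHom.congr_fun_of_forall_tmul (tensTE · ·) hTEspan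
    ((QuotientAddGroup.mk' JK).comp (C.flip (rΩ η a)))
    ((rT2E.flip a).comp ((QuotientAddGroup.mk' JK).comp (C.flip η)))
    (fun ξ e => by
      simp only [AddMonoidHom.comp_apply, AddMonoidHom.flip_apply, hC, hσrmod,
        mk_jlift_rTE hTEspan hjlift hrTE hrT2E]) ψ

theorem wl_eq_mk_jlift {wl : Ω1 → TE →+ T11E ⧸ JK}
    (hTEspan : ∀ x : TE, x ∈ AddSubgroup.closure (Set.range fun p : Ω1 × E => tensTE p.1 p.2))
    (hjlift : ∀ ξ η e, jlift ξ (tensTE η e) = jmap (tens11 ξ η) e)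
    (hwl : ∀ ξ η e, wl ξ (tensTE η e) = QuotientAddGroup.mk' JK (jmap (tens11 ξ η) e))
    (ξ : Ω1) (ψ : TE) : wl ξ ψ = QuotientAddGroup.mk' JK (jlift ξ ψ) :=
  AddMonoidHom.congr_fun_of_forall_tmul (tensTE · ·) hTEspan (wl ξ)
    ((QuotientAddGroup.mk' JK).comp (jlift ξ))
    (fun η e => by rw [AddMonoidHom.comp_apply, hwl, hjlift]) ψ

theorem DT_rTE {K : AddSubgroup T11} {d1 : Ω1 →+ T11 ⧸ K} {m2 : T11 ⧸ K →+ E →+ T11E ⧸ JK}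
    {DT : TE →+ T11E ⧸ JK}
    (hTEspan : ∀ x : TE, x ∈ AddSubgroup.closure (Set.range fun p : Ω1 × E => tensTE p.1 p.2))
    (hrTE : ∀ ξ e a, rTE (tensTE ξ e) a = tensTE ξ (rE e a))
    (hrT2E : ∀ x e a, rT2E (QuotientAddGroup.mk' JK (jmap x e)) a
      = QuotientAddGroup.mk' JK (jmap x (rE e a)))
    (hm2 : ∀ x e, m2 (QuotientAddGroup.mk' K x) e = QuotientAddGroup.mk' JK (jmap x e))
    (hDT : ∀ ξ e, DT (tensTE ξ e) = m2 (d1 ξ) e) (ψ : TE) (a : A) :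
    DT (rTE ψ a) = rT2E (DT ψ) a :=
  AddMonoidHom.congr_fun_of_forall_tmul (tensTE · ·) hTEspan (DT.comp (rTE.flip a))
    ((rT2E.flip a).comp DT)
    (fun ξ e => by
      obtain ⟨x, hx⟩ := QuotientAddGroup.mk'_surjective K (d1 ξ)
      simp only [AddMonoidHom.comp_apply, AddMonoidHom.flip_apply, hrTE, hDT, ← hx, hm2,
        hrT2E]) ψ

theorem WL_rTE {wl : Ω1 → TE →+ T11E ⧸ JK} {WL : TE →+ T11E ⧸ JK}
    (hTEspan : ∀ x : TE, x ∈ AddSubgroup.closure (Set.range fun p : Ω1 × E => tensTE p.1 p.2))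
    (hjlift : ∀ ξ η e, jlift ξ (tensTE η e) = jmap (tens11 ξ η) e)
    (hrTE : ∀ ξ e a, rTE (tensTE ξ e) a = tensTE ξ (rE e a))
    (hrT2E : ∀ x e a, rT2E (QuotientAddGroup.mk' JK (jmap x e)) a
      = QuotientAddGroup.mk' JK (jmap x (rE e a)))
    (hC : ∀ ξ e η, C (tensTE ξ e) η = jlift ξ (σ (tensET e η)))
    (hbiconn : ∀ e a, nabE (rE e a) = σ (tensET e (d0 a)) + rTE (nabE e) a)
    (hwl : ∀ ξ η e, wl ξ (tensTE η e) = QuotientAddGroup.mk' JK (jmap (tens11 ξ η) e))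
    (hWL : ∀ ξ e, WL (tensTE ξ e) = wl ξ (nabE e)) (ψ : TE) (a : A) :
    WL (rTE ψ a) = QuotientAddGroup.mk' JK (C ψ (d0 a)) + rT2E (WL ψ) a :=
  AddMonoidHom.congr_fun_of_forall_tmul (tensTE · ·) hTEspan (WL.comp (rTE.flip a))
    ((QuotientAddGroup.mk' JK).comp (C.flip (d0 a)) + (rT2E.flip a).comp WL)
    (fun ξ e => by
      simp only [AddMonoidHom.comp_apply, AddMonoidHom.flip_apply, AddMonoidHom.add_apply, hrTE,
        hWL, hbiconn, wl_eq_mk_jlift hTEspan hjlift hwl, map_add, hC,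
        mk_jlift_rTE hTEspan hjlift hrTE hrT2E]) ψ

theorem Φ_imap_smul_rT11 [Module A Ω1] [Module A T11] {rT11 : T11 →+ A →+ T11}
    {imap : E →+ T11 →+ ET11} {Φ : ET11 →+ T11E}
    (h11mod : ∀ (a : A) ξ η, a • tens11 ξ η = tens11 (a • ξ) η)
    (hrT11 : ∀ ξ η a, rT11 (tens11 ξ η) a = tens11 ξ (rΩ η a))
    (hΦ : ∀ e ξ η, Φ (imap e (tens11 ξ η)) = C (σ (tensET e ξ)) η)
    (e : E) (c c' : A) (ξ η : Ω1) :
    Φ (imap e (c • rT11 (tens11 ξ η) c')) = C (σ (tensET e (c • ξ))) (rΩ η c') := by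
  rw [hrT11, h11mod, hΦ]

end TensorCompatibility

theorem maximal_prolongation_extendability_general
    {A Ω1 E T11 TE ET ET11 T11E : Type*} [Ring A]
    [AddCommGroup Ω1] [AddCommGroup E] [AddCommGroup T11] [AddCommGroup TE]
    [AddCommGroup ET] [AddCommGroup ET11] [AddCommGroup T11E]
    [Module A Ω1] [Module A T11]
    -- first order calculus: right action of A on Ω¹ and the differential d
    (rΩ : Ω1 →+ A →+ Ω1)
    (d0 : A →+ Ω1)
    (hleib : ∀ a b : A, d0 (a * b) = a • d0 b + rΩ (d0 a) b)
    -- T11 = Ω¹ ⊗_A Ω¹ with its bimodule structure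
    (tens11 : Ω1 →+ Ω1 →+ T11)
    (h11mod : ∀ (a : A) (ξ η : Ω1), a • tens11 ξ η = tens11 (a • ξ) η)
    (rT11 : T11 →+ A →+ T11)
    (hrT11 : ∀ (ξ η : Ω1) (a : A), rT11 (tens11 ξ η) a = tens11 ξ (rΩ η a))
    -- K = ker∧ ⊆ Ω¹⊗Ω¹ : the sub-bimodule generated by the quadratic relations
    (K : AddSubgroup T11)
    (hK : K = AddSubgroup.closure
      {x : T11 | ∃ (p q : ℕ) (a b : Fin p → A) (r s : Fin q → A) (c c' : A),
        (∑ i, a i • d0 (b i)) = (∑ j, rΩ (d0 (r j)) (s j)) ∧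
        x = c • rT11 ((∑ i, tens11 (d0 (a i)) (d0 (b i)))
                      + ∑ j, tens11 (d0 (r j)) (d0 (s j))) c'})
    -- the A-bimodule E
    (rE : E →+ A →+ E)
    (hrE1 : ∀ (e : E) (a b : A), rE (rE e a) b = rE e (a * b))
    -- TE = Ω¹⊗_A E and ET = E⊗_A Ω¹
    (tensTE : Ω1 →+ E →+ TE) (tensET : E →+ Ω1 →+ ET)
    (rTE : TE →+ A →+ TE)
    (hrTE : ∀ (ξ : Ω1) (e : E) (a : A), rTE (tensTE ξ e) a = tensTE ξ (rE e a))
    (hTEspan : ∀ x : TE,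
      x ∈ AddSubgroup.closure (Set.range fun p : Ω1 × E => tensTE p.1 p.2))
    -- the left bimodule connection (∇_E, σ_E)
    (nabE : E →+ TE)
    (σ : ET →+ TE)
    (hbiconn : ∀ (e : E) (a : A),
      nabE (rE e a) = σ (tensET e (d0 a)) + rTE (nabE e) a)
    (hσrmod : ∀ (e : E) (ξ : Ω1) (a : A),
      σ (tensET e (rΩ ξ a)) = rTE (σ (tensET e ξ)) a)
    -- the triple tensor products and the map Φ = (id⊗σ)(σ⊗id)
    (imap : E →+ T11 →+ ET11) (jmap : T11 →+ E →+ T11E)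
    (jlift : Ω1 → TE →+ T11E)
    (hjlift : ∀ (ξ η : Ω1) (e : E), jlift ξ (tensTE η e) = jmap (tens11 ξ η) e)
    (C : TE →+ Ω1 →+ T11E)
    (hC : ∀ (ξ : Ω1) (e : E) (η : Ω1),
      C (tensTE ξ e) η = jlift ξ (σ (tensET e η)))
    (Φ : ET11 →+ T11E)
    (hΦ : ∀ (e : E) (ξ η : Ω1),
      Φ (imap e (tens11 ξ η)) = C (σ (tensET e ξ)) η)
    -- the images of K in the triple tensor products
    (JK : AddSubgroup T11E)
    (JE : AddSubgroup ET11)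
    (hJE : JE = AddSubgroup.closure {y : ET11 | ∃ x ∈ K, ∃ e : E, y = imap e x})
    -- Ω² = (Ω¹⊗Ω¹)/K (maximal prolongation) and its differential
    (d1 : Ω1 →+ T11 ⧸ K)
    -- the structure maps into Ω²⊗_A E = T11E/JK and the curvature R_E
    (m2 : T11 ⧸ K →+ E →+ T11E ⧸ JK)
    (hm2 : ∀ (x : T11) (e : E),
      m2 (QuotientAddGroup.mk' K x) e = QuotientAddGroup.mk' JK (jmap x e))
    (DT : TE →+ T11E ⧸ JK)
    (hDT : ∀ (ξ : Ω1) (e : E), DT (tensTE ξ e) = m2 (d1 ξ) e)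
    (wl : Ω1 → TE →+ T11E ⧸ JK)
    (hwl : ∀ (ξ η : Ω1) (e : E),
      wl ξ (tensTE η e) = QuotientAddGroup.mk' JK (jmap (tens11 ξ η) e))
    (WL : TE →+ T11E ⧸ JK)
    (hWL : ∀ (ξ : Ω1) (e : E), WL (tensTE ξ e) = wl ξ (nabE e))
    (rT2E : T11E ⧸ JK →+ A →+ T11E ⧸ JK)
    (hrT2E : ∀ (x : T11) (e : E) (a : A),
      rT2E (QuotientAddGroup.mk' JK (jmap x e)) a
        = QuotientAddGroup.mk' JK (jmap x (rE e a)))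
    -- hypothesis: the curvature R_E = (d⊗id − id∧∇_E)∇_E is a right module map
    (hR : ∀ (e : E) (a : A),
      DT (nabE (rE e a)) - WL (nabE (rE e a))
        = rT2E (DT (nabE e) - WL (nabE e)) a) :
    -- conclusion: Φ maps E⊗_A ker∧ into ker∧⊗_A E, hence σ extends to degree 2
    (∀ (e : E), ∀ x ∈ K, Φ (imap e x) ∈ JK)
    ∧ ∃ σ2 : ET11 ⧸ JE →+ T11E ⧸ JK,
        ∀ z : ET11,
          σ2 (QuotientAddGroup.mk' JE z) = QuotientAddGroup.mk' JK (Φ z) := by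
  have hrTE_assoc := rTE_rTE hTEspan hrTE hrE1
  have hC_rΩ := mk_C_rΩ hTEspan hjlift hrTE hrT2E hC hσrmod
  have hR_rTE : ∀ ψ a, (DT - WL) (rTE ψ a)
      = rT2E ((DT - WL) ψ) a - QuotientAddGroup.mk' JK (C ψ (d0 a)) := fun ψ a => by
    rw [AddMonoidHom.sub_apply, DT_rTE hTEspan hrTE hrT2E hm2 hDT,
      WL_rTE hTEspan hjlift hrTE hrT2E hC hbiconn hwl hWL, AddMonoidHom.sub_apply, map_sub,
      AddMonoidHom.sub_apply]
    abel
  have hΦK : ∀ (e : E), ∀ x ∈ K, Φ (imap e x) ∈ JK := by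
    intro e x hx
    rw [hK] at hx
    refine (AddSubgroup.closure_le (JK.comap (Φ.comp (imap e)))).2 ?_ hx
    rintro _ ⟨p, q, a, b, r, s, c, c', hrel, rfl⟩
    rw [SetLike.mem_coe, AddSubgroup.mem_comap, AddMonoidHom.comp_apply,
      ← QuotientAddGroup.eq_zero_iff,
      ← sum_idσ_sigma_eq_zero (idσ := C.compr₂ (QuotientAddGroup.mk' JK)) hleib hbiconn hσrmod
        hrE1 hrTE_assoc hR_rTE hC_rΩ hR hrel e c c']
    simp [smul_add, Finset.smul_sum, Φ_imap_smul_rT11 h11mod hrT11 hΦ]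
  refine ⟨hΦK, QuotientAddGroup.map JE JK Φ ?_, fun z => rfl⟩
  rw [hJE, AddSubgroup.closure_le]
  rintro _ ⟨x, hx, e, rfl⟩
  exact hΦK e x hx

/-- if `A` carries the maximal prolongation of a first order calculus and
`(E, ∇_E, σ_E)` is a left bimodule connection whose curvature `R_E` is a right
`A`-module map, then `Φ = (id⊗σ_E)(σ_E⊗id)` maps `E⊗_A ker∧` into `ker∧⊗_A E`, and
hence `σ_E` extends to a map `E⊗_AΩ² → Ω²⊗_AE` (so the connection is extendable in
degree 2).  Here `Ω² = (Ω¹⊗_AΩ¹)/ker∧` where `ker∧ = K` is the sub-bimodule generated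
by the elements `da⊗db + dr⊗ds` for relations `a·db = dr·s` (implicit sums), and all
tensor products are realised abstractly: `T11 = Ω¹⊗Ω¹`, `TE = Ω¹⊗E`, `ET = E⊗Ω¹`,
`ET11 = E⊗Ω¹⊗Ω¹`, `T11E = Ω¹⊗Ω¹⊗E`, with `E⊗Ω²`, `Ω²⊗E` the corresponding
quotients. -/
theorem maximal_prolongation_extendability
    {A Ω1 E T11 TE ET ET11 T11E : Type*} [Ring A]
    [AddCommGroup Ω1] [AddCommGroup E] [AddCommGroup T11] [AddCommGroup TE]
    [AddCommGroup ET] [AddCommGroup ET11] [AddCommGroup T11E]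
    [Module A Ω1] [Module A E] [Module A T11] [Module A TE]
    -- first order calculus: right action of A on Ω¹ and the differential d
    (rΩ : Ω1 →+ A →+ Ω1)
    (hrΩ1 : ∀ (ξ : Ω1) (a b : A), rΩ (rΩ ξ a) b = rΩ ξ (a * b))
    (hrΩ2 : ∀ (a : A) (ξ : Ω1) (b : A), rΩ (a • ξ) b = a • rΩ ξ b)
    (hrΩ3 : ∀ ξ : Ω1, rΩ ξ 1 = ξ)
    (d0 : A →+ Ω1)
    (hleib : ∀ a b : A, d0 (a * b) = a • d0 b + rΩ (d0 a) b)
    (hΩspan : ∀ ξ : Ω1,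
      ξ ∈ AddSubgroup.closure {x : Ω1 | ∃ a b : A, x = a • d0 b})
    -- T11 = Ω¹ ⊗_A Ω¹ with its bimodule structure
    (tens11 : Ω1 →+ Ω1 →+ T11)
    (h11mod : ∀ (a : A) (ξ η : Ω1), a • tens11 ξ η = tens11 (a • ξ) η)
    (rT11 : T11 →+ A →+ T11)
    (hrT11 : ∀ (ξ η : Ω1) (a : A), rT11 (tens11 ξ η) a = tens11 ξ (rΩ η a))
    (h11bal : ∀ (ξ : Ω1) (a : A) (η : Ω1), tens11 (rΩ ξ a) η = tens11 ξ (a • η))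
    (h11span : ∀ x : T11,
      x ∈ AddSubgroup.closure (Set.range fun p : Ω1 × Ω1 => tens11 p.1 p.2))
    -- K = ker∧ ⊆ Ω¹⊗Ω¹ : the sub-bimodule generated by the quadratic relations
    (K : AddSubgroup T11)
    (hK : K = AddSubgroup.closure
      {x : T11 | ∃ (p q : ℕ) (a b : Fin p → A) (r s : Fin q → A) (c c' : A),
        (∑ i, a i • d0 (b i)) = (∑ j, rΩ (d0 (r j)) (s j)) ∧
        x = c • rT11 ((∑ i, tens11 (d0 (a i)) (d0 (b i)))
                      + ∑ j, tens11 (d0 (r j)) (d0 (s j))) c'})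
    -- the A-bimodule E
    (rE : E →+ A →+ E)
    (hrE1 : ∀ (e : E) (a b : A), rE (rE e a) b = rE e (a * b))
    (hrE2 : ∀ (a : A) (e : E) (b : A), rE (a • e) b = a • rE e b)
    (hrE3 : ∀ e : E, rE e 1 = e)
    -- TE = Ω¹⊗_A E and ET = E⊗_A Ω¹
    (tensTE : Ω1 →+ E →+ TE) (tensET : E →+ Ω1 →+ ET)
    (hTEmod : ∀ (a : A) (ξ : Ω1) (e : E), a • tensTE ξ e = tensTE (a • ξ) e)
    (rTE : TE →+ A →+ TE)
    (hrTE : ∀ (ξ : Ω1) (e : E) (a : A), rTE (tensTE ξ e) a = tensTE ξ (rE e a))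
    (hTEspan : ∀ x : TE,
      x ∈ AddSubgroup.closure (Set.range fun p : Ω1 × E => tensTE p.1 p.2))
    -- the left bimodule connection (∇_E, σ_E)
    (nabE : E →+ TE)
    (hconn : ∀ (a : A) (e : E), nabE (a • e) = tensTE (d0 a) e + a • nabE e)
    (σ : ET →+ TE)
    (hbiconn : ∀ (e : E) (a : A),
      nabE (rE e a) = σ (tensET e (d0 a)) + rTE (nabE e) a)
    (hσmod : ∀ (a : A) (e : E) (ξ : Ω1),
      σ (tensET (a • e) ξ) = a • σ (tensET e ξ))
    (hσrmod : ∀ (e : E) (ξ : Ω1) (a : A),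
      σ (tensET e (rΩ ξ a)) = rTE (σ (tensET e ξ)) a)
    -- the triple tensor products and the map Φ = (id⊗σ)(σ⊗id)
    (imap : E →+ T11 →+ ET11) (jmap : T11 →+ E →+ T11E)
    (jlift : Ω1 → TE →+ T11E)
    (hjlift : ∀ (ξ η : Ω1) (e : E), jlift ξ (tensTE η e) = jmap (tens11 ξ η) e)
    (C : TE →+ Ω1 →+ T11E)
    (hC : ∀ (ξ : Ω1) (e : E) (η : Ω1),
      C (tensTE ξ e) η = jlift ξ (σ (tensET e η)))
    (Φ : ET11 →+ T11E)
    (hΦ : ∀ (e : E) (ξ η : Ω1),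
      Φ (imap e (tens11 ξ η)) = C (σ (tensET e ξ)) η)
    -- the images of K in the triple tensor products
    (JK : AddSubgroup T11E)
    (hJK : JK = AddSubgroup.closure {y : T11E | ∃ x ∈ K, ∃ e : E, y = jmap x e})
    (JE : AddSubgroup ET11)
    (hJE : JE = AddSubgroup.closure {y : ET11 | ∃ x ∈ K, ∃ e : E, y = imap e x})
    -- Ω² = (Ω¹⊗Ω¹)/K (maximal prolongation) and its differential
    (d1 : Ω1 →+ T11 ⧸ K)
    (hd1 : ∀ a b : A,
      d1 (a • d0 b) = QuotientAddGroup.mk' K (tens11 (d0 a) (d0 b)))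
    -- the structure maps into Ω²⊗_A E = T11E/JK and the curvature R_E
    (m2 : T11 ⧸ K →+ E →+ T11E ⧸ JK)
    (hm2 : ∀ (x : T11) (e : E),
      m2 (QuotientAddGroup.mk' K x) e = QuotientAddGroup.mk' JK (jmap x e))
    (DT : TE →+ T11E ⧸ JK)
    (hDT : ∀ (ξ : Ω1) (e : E), DT (tensTE ξ e) = m2 (d1 ξ) e)
    (wl : Ω1 → TE →+ T11E ⧸ JK)
    (hwl : ∀ (ξ η : Ω1) (e : E),
      wl ξ (tensTE η e) = QuotientAddGroup.mk' JK (jmap (tens11 ξ η) e))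
    (WL : TE →+ T11E ⧸ JK)
    (hWL : ∀ (ξ : Ω1) (e : E), WL (tensTE ξ e) = wl ξ (nabE e))
    (rT2E : T11E ⧸ JK →+ A →+ T11E ⧸ JK)
    (hrT2E : ∀ (x : T11) (e : E) (a : A),
      rT2E (QuotientAddGroup.mk' JK (jmap x e)) a
        = QuotientAddGroup.mk' JK (jmap x (rE e a)))
    -- hypothesis: the curvature R_E = (d⊗id − id∧∇_E)∇_E is a right module map
    (hR : ∀ (e : E) (a : A),
      DT (nabE (rE e a)) - WL (nabE (rE e a))
        = rT2E (DT (nabE e) - WL (nabE e)) a) :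
    -- conclusion: Φ maps E⊗_A ker∧ into ker∧⊗_A E, hence σ extends to degree 2
    (∀ (e : E), ∀ x ∈ K, Φ (imap e x) ∈ JK)
    ∧ ∃ σ2 : ET11 ⧸ JE →+ T11E ⧸ JK,
        ∀ z : ET11,
          σ2 (QuotientAddGroup.mk' JE z) = QuotientAddGroup.mk' JK (Φ z) :=
  maximal_prolongation_extendability_general rΩ d0 hleib tens11 h11mod rT11 hrT11 K hK rE hrE1
    tensTE tensET rTE hrTE hTEspan nabE σ hbiconn hσrmod imap jmap jlift hjlift C hC Φ hΦ JK JE hJE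
    d1 m2 hm2 DT hDT wl hwl WL hWL rT2E hrT2E hR
end

section
/- For a line A-module L with extendable bimodule connection whose curvature R_L is a bimodule map, there exists a unique central 2-form ω_L ∈ Ω² (commuting with all of A) such that R_L(e) = ω_L ⊗ e for all e ∈ L; moreover for two such line modules L, M, the curvature 2-form of the tensor product connection on L⊗_AM is ω_{L⊗M} = ω_L + Φ̂_L(ω_M), where Φ̂_L(ξ)⊗e = σ_L(e⊗ξ) defines the extended Fröhlich map on central forms. -/
/-!
Since `R_L` is a right module map, the Morita property writes it as `ω ⊗ -` for a unique `ω`.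
The same property makes `ω ↦ ω ⊗ -` injective, and left linearity of `R_L` gives
`(a ω) ⊗ e = R_L(a e) = ω ⊗ a e = (ω a) ⊗ e`, so `ω` is central. For the tensor product,
`σ_L(e ⊗ ω_M) = Φ̂_L(ω_M) ⊗ e` turns the curvature formula on a pure tensor `e ⊗ m` into
`(ω_L + Φ̂_L(ω_M)) ⊗ e ⊗ m`, and pure tensors generate `L ⊗_A M`.
-/

section LineModule

variable {A Ω L T : Type*} [AddZeroClass A] [AddCommGroup Ω] [AddCommGroup L] [AddCommGroup T]
  {rL : L →+ A →+ L} {rT : T →+ A →+ T} {t : Ω →+ L →+ T}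

theorem eq_of_forall_tensor_eq_of_morita
    (hrt : ∀ (ω : Ω) (e : L) (a : A), rT (t ω e) a = t ω (rL e a))
    (hMorita : ∀ S : L →+ T, (∀ (e : L) (a : A), S (rL e a) = rT (S e) a) →
      ∃! ω : Ω, ∀ e : L, S e = t ω e)
    {ω ω' : Ω} (h : ∀ e : L, t ω e = t ω' e) : ω = ω' :=
  (hMorita (t ω) fun e a => (hrt ω e a).symm).unique (fun _ => rfl) h

theorem existsUnique_central_of_bimodule_map [SMul A Ω] [SMul A L] [SMul A T]
    {rΩ : Ω →+ A →+ Ω}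
    (hlt : ∀ (a : A) (ω : Ω) (e : L), a • t ω e = t (a • ω) e)
    (hrt : ∀ (ω : Ω) (e : L) (a : A), rT (t ω e) a = t ω (rL e a))
    (hbal : ∀ (ω : Ω) (a : A) (e : L), t (rΩ ω a) e = t ω (a • e))
    (hMorita : ∀ S : L →+ T, (∀ (e : L) (a : A), S (rL e a) = rT (S e) a) →
      ∃! ω : Ω, ∀ e : L, S e = t ω e)
    {S : L →+ T} (hSl : ∀ (a : A) (e : L), S (a • e) = a • S e)
    (hSr : ∀ (e : L) (a : A), S (rL e a) = rT (S e) a) :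
    ∃! ω : Ω, (∀ a : A, a • ω = rΩ ω a) ∧ ∀ e : L, S e = t ω e := by
  obtain ⟨ω, hω, huniq⟩ := hMorita S hSr
  have hcentral (a : A) : a • ω = rΩ ω a :=
    eq_of_forall_tensor_eq_of_morita hrt hMorita fun e => by
      rw [← hlt, ← hω, ← hSl, hω, hbal]
  exact ⟨ω, ⟨hcentral, hω⟩, fun ω' h => huniq ω' h.2⟩

end LineModule

/-- Here `LT2 = L⊗_A Ω²`, `T2M = Ω²⊗_A M`, and `hRLM` is the tensor curvature formula
`R_{L⊗M} = R_L⊗id + (σ_L⊗id)(id⊗R_M)`. -/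
theorem line_module_curvature_two_form_general
    {A Ω2 L T2L LT2 M T2M LM T2LM : Type*} [Ring A]
    [AddCommGroup Ω2] [AddCommGroup L]
    [AddCommGroup T2L] [AddCommGroup LT2]
    [AddCommGroup M] [AddCommGroup T2M]
    [AddCommGroup LM] [AddCommGroup T2LM]
    [Module A Ω2] [Module A L] [Module A T2L]
    -- right actions on the calculus
    (rΩ2 : Ω2 →+ A →+ Ω2)
    -- the bimodule L
    (rL : L →+ A →+ L)
    -- TL = Ω¹⊗_A L, T2L = Ω²⊗_A L
    (tens2L : Ω2 →+ L →+ T2L)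
    (h2Lmod : ∀ (a : A) (ω : Ω2) (e : L), a • tens2L ω e = tens2L (a • ω) e)
    (rT2L : T2L →+ A →+ T2L)
    (hrT2L : ∀ (ω : Ω2) (e : L) (a : A),
      rT2L (tens2L ω e) a = tens2L ω (rL e a))
    (h2Lbal : ∀ (ω : Ω2) (a : A) (e : L),
      tens2L (rΩ2 ω a) e = tens2L ω (a • e))
    -- the bimodule connection (∇_L, σ_L) and its degree-2 extension σ_L²
    (tensLT2 : L →+ Ω2 →+ LT2)
    (σL2 : LT2 →+ T2L)
    -- the curvature of L, a bimodule map
    (RL : L →+ T2L)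
    (hRLl : ∀ (a : A) (e : L), RL (a • e) = a • RL e)
    (hRLr : ∀ (e : L) (a : A), RL (rL e a) = rT2L (RL e) a)
    -- the line-module (Morita) property of L with coefficients Ω²
    (hMorita : ∀ S : L →+ T2L,
      (∀ (e : L) (a : A), S (rL e a) = rT2L (S e) a) →
      ∃! ω : Ω2, ∀ e : L, S e = tens2L ω e)
    -- the second line module M with its connection and curvature
    (tens2M : Ω2 →+ M →+ T2M)
    (RM : M →+ T2M)
    -- L⊗_A M and Ω²⊗_A L⊗_A M, and the curvature of the tensor product connection
    (tensLM : L →+ M →+ LM)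
    (hLMspan : ∀ z : LM,
      z ∈ AddSubgroup.closure (Set.range fun p : L × M => tensLM p.1 p.2))
    (tens2LM : Ω2 →+ LM →+ T2LM)
    (j : T2L →+ M →+ T2LM)
    (hj : ∀ (ω : Ω2) (e : L) (m : M),
      j (tens2L ω e) m = tens2LM ω (tensLM e m))
    (SL : L → T2M →+ T2LM)
    (hSL : ∀ (e : L) (ω : Ω2) (m : M),
      SL e (tens2M ω m) = j (σL2 (tensLT2 e ω)) m)
    (RLM : LM →+ T2LM)
    (hRLM : ∀ (e : L) (m : M),
      RLM (tensLM e m) = j (RL e) m + SL e (RM m))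
    -- the extended Fröhlich map on central 2-forms
    (Φhat : Ω2 → Ω2)
    (hΦ : ∀ ω : Ω2, (∀ a : A, a • ω = rΩ2 ω a) →
      ∀ e : L, σL2 (tensLT2 e ω) = tens2L (Φhat ω) e) :
    -- (1) existence and uniqueness of the central curvature 2-form of L
    (∃! ω : Ω2, (∀ a : A, a • ω = rΩ2 ω a) ∧ ∀ e : L, RL e = tens2L ω e)
    ∧
    -- (2) the curvature 2-form of L⊗_A M is ω_L + Φ̂_L(ω_M)
    (∀ ωL ωM : Ω2,
      ((∀ a : A, a • ωL = rΩ2 ωL a) ∧ ∀ e : L, RL e = tens2L ωL e) →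
      ((∀ a : A, a • ωM = rΩ2 ωM a) ∧ ∀ m : M, RM m = tens2M ωM m) →
      ∀ z : LM, RLM z = tens2LM (ωL + Φhat ωM) z) := by
  refine ⟨existsUnique_central_of_bimodule_map h2Lmod hrT2L h2Lbal hMorita hRLl hRLr, ?_⟩
  rintro ωL ωM ⟨-, hRL⟩ ⟨hωM, hRM⟩ z
  have on_pure_tensors : Set.EqOn RLM (tens2LM (ωL + Φhat ωM))
      (Set.range fun p : L × M => tensLM p.1 p.2) := by
    rintro _ ⟨⟨e, m⟩, rfl⟩
    rw [hRLM, hRL, hRM, hSL, hΦ ωM hωM, hj, hj, map_add, AddMonoidHom.add_apply]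
  exact AddMonoidHom.eqOn_closure on_pure_tensors (hLMspan z)

/-- line modules: for a line `A`-module `L` with extendable bimodule
connection whose curvature `R_L` is a bimodule map, there is a unique central 2-form
`ω_L ∈ Ω²` with `R_L(e) = ω_L ⊗ e` for all `e ∈ L`; and for two such line modules
`L, M` the curvature 2-form of the tensor product connection on `L⊗_A M` is
`ω_{L⊗M} = ω_L + Φ̂_L(ω_M)`, where `Φ̂_L(ξ)⊗e = σ_L(e⊗ξ)` is the extended Fröhlich
map on central forms.  The line-module (Morita) property is encoded by the standard
fact that every right module map `L → Ω²⊗_A L` is `e ↦ ω⊗e` for a unique `ω`.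
Abstract realisations: `TL = Ω¹⊗L`, `T2L = Ω²⊗L`, `LT = L⊗Ω¹`, `LT2 = L⊗Ω²`,
`TM = Ω¹⊗M`, `T2M = Ω²⊗M`, `MT = M⊗Ω¹`, `LM = L⊗M`, `T2LM = Ω²⊗L⊗M`;
curvatures are `R = (d⊗id − id∧∇)∘∇` and
`R_{L⊗M} = R_L⊗id + (σ_L⊗id)(id⊗R_M)` (tensor curvature formula). -/
theorem line_module_curvature_two_form
    {A Ω1 Ω2 L TL T2L LT LT2 M TM T2M MT LM T2LM : Type*} [Ring A]
    [AddCommGroup Ω1] [AddCommGroup Ω2] [AddCommGroup L] [AddCommGroup TL]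
    [AddCommGroup T2L] [AddCommGroup LT] [AddCommGroup LT2]
    [AddCommGroup M] [AddCommGroup TM] [AddCommGroup T2M] [AddCommGroup MT]
    [AddCommGroup LM] [AddCommGroup T2LM]
    [Module A Ω1] [Module A Ω2] [Module A L] [Module A TL] [Module A T2L]
    [Module A M]
    -- right actions on the calculus
    (rΩ1 : Ω1 →+ A →+ Ω1) (rΩ2 : Ω2 →+ A →+ Ω2)
    -- differentials and wedge
    (d0 : A →+ Ω1) (d1 : Ω1 →+ Ω2) (w11 : Ω1 →+ Ω1 →+ Ω2)
    (hleib : ∀ a b : A, d0 (a * b) = a • d0 b + rΩ1 (d0 a) b)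
    (hd2 : ∀ a : A, d1 (d0 a) = 0)
    -- the bimodule L
    (rL : L →+ A →+ L)
    -- TL = Ω¹⊗_A L, T2L = Ω²⊗_A L
    (tensL : Ω1 →+ L →+ TL)
    (hTLmod : ∀ (a : A) (ξ : Ω1) (e : L), a • tensL ξ e = tensL (a • ξ) e)
    (tens2L : Ω2 →+ L →+ T2L)
    (h2Lmod : ∀ (a : A) (ω : Ω2) (e : L), a • tens2L ω e = tens2L (a • ω) e)
    (rT2L : T2L →+ A →+ T2L)
    (hrT2L : ∀ (ω : Ω2) (e : L) (a : A),
      rT2L (tens2L ω e) a = tens2L ω (rL e a))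
    (h2Lbal : ∀ (ω : Ω2) (a : A) (e : L),
      tens2L (rΩ2 ω a) e = tens2L ω (a • e))
    -- the bimodule connection (∇_L, σ_L) and its degree-2 extension σ_L²
    (tensLT : L →+ Ω1 →+ LT) (tensLT2 : L →+ Ω2 →+ LT2)
    (nabL : L →+ TL)
    (hconnL : ∀ (a : A) (e : L), nabL (a • e) = tensL (d0 a) e + a • nabL e)
    (σL : LT →+ TL) (σL2 : LT2 →+ T2L)
    (rTL : TL →+ A →+ TL)
    (hrTL : ∀ (ξ : Ω1) (e : L) (a : A), rTL (tensL ξ e) a = tensL ξ (rL e a))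
    (hbiconnL : ∀ (e : L) (a : A),
      nabL (rL e a) = σL (tensLT e (d0 a)) + rTL (nabL e) a)
    (w1L : Ω1 → TL →+ T2L)
    (hw1L : ∀ (ξ α : Ω1) (e : L), w1L ξ (tensL α e) = tens2L (w11 ξ α) e)
    (BwL : TL →+ Ω1 →+ T2L)
    (hBwL : ∀ (ξ : Ω1) (e : L) (η : Ω1),
      BwL (tensL ξ e) η = w1L ξ (σL (tensLT e η)))
    (hextL : ∀ (e : L) (ξ η : Ω1),
      σL2 (tensLT2 e (w11 ξ η)) = BwL (σL (tensLT e ξ)) η)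
    -- the curvature of L, a bimodule map
    (DT : TL →+ T2L)
    (hDT : ∀ (ξ : Ω1) (e : L), DT (tensL ξ e) = tens2L (d1 ξ) e)
    (WN : TL →+ T2L)
    (hWN : ∀ (ξ : Ω1) (e : L), WN (tensL ξ e) = w1L ξ (nabL e))
    (RL : L →+ T2L)
    (hRLdef : ∀ e : L, RL e = DT (nabL e) - WN (nabL e))
    (hRLl : ∀ (a : A) (e : L), RL (a • e) = a • RL e)
    (hRLr : ∀ (e : L) (a : A), RL (rL e a) = rT2L (RL e) a)
    -- the line-module (Morita) property of L with coefficients Ω²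
    (hMorita : ∀ S : L →+ T2L,
      (∀ (e : L) (a : A), S (rL e a) = rT2L (S e) a) →
      ∃! ω : Ω2, ∀ e : L, S e = tens2L ω e)
    -- the second line module M with its connection and curvature
    (rM : M →+ A →+ M)
    (tensM : Ω1 →+ M →+ TM) (tens2M : Ω2 →+ M →+ T2M)
    (nabM : M →+ TM)
    (w1M : Ω1 → TM →+ T2M)
    (hw1M : ∀ (ξ α : Ω1) (m : M), w1M ξ (tensM α m) = tens2M (w11 ξ α) m)
    (DTM : TM →+ T2M)
    (hDTM : ∀ (ξ : Ω1) (m : M), DTM (tensM ξ m) = tens2M (d1 ξ) m)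
    (WNM : TM →+ T2M)
    (hWNM : ∀ (ξ : Ω1) (m : M), WNM (tensM ξ m) = w1M ξ (nabM m))
    (RM : M →+ T2M)
    (hRMdef : ∀ m : M, RM m = DTM (nabM m) - WNM (nabM m))
    -- L⊗_A M and Ω²⊗_A L⊗_A M, and the curvature of the tensor product connection
    (tensLM : L →+ M →+ LM)
    (hLMspan : ∀ z : LM,
      z ∈ AddSubgroup.closure (Set.range fun p : L × M => tensLM p.1 p.2))
    (tens2LM : Ω2 →+ LM →+ T2LM)
    (j : T2L →+ M →+ T2LM)
    (hj : ∀ (ω : Ω2) (e : L) (m : M),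
      j (tens2L ω e) m = tens2LM ω (tensLM e m))
    (SL : L → T2M →+ T2LM)
    (hSL : ∀ (e : L) (ω : Ω2) (m : M),
      SL e (tens2M ω m) = j (σL2 (tensLT2 e ω)) m)
    (RLM : LM →+ T2LM)
    (hRLM : ∀ (e : L) (m : M),
      RLM (tensLM e m) = j (RL e) m + SL e (RM m))
    -- the extended Fröhlich map on central 2-forms
    (Φhat : Ω2 → Ω2)
    (hΦ : ∀ ω : Ω2, (∀ a : A, a • ω = rΩ2 ω a) →
      ∀ e : L, σL2 (tensLT2 e ω) = tens2L (Φhat ω) e) :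
    -- (1) existence and uniqueness of the central curvature 2-form of L
    (∃! ω : Ω2, (∀ a : A, a • ω = rΩ2 ω a) ∧ ∀ e : L, RL e = tens2L ω e)
    ∧
    -- (2) the curvature 2-form of L⊗_A M is ω_L + Φ̂_L(ω_M)
    (∀ ωL ωM : Ω2,
      ((∀ a : A, a • ωL = rΩ2 ωL a) ∧ ∀ e : L, RL e = tens2L ωL e) →
      ((∀ a : A, a • ωM = rΩ2 ωM a) ∧ ∀ m : M, RM m = tens2M ωM m) →
      ∀ z : LM, RLM z = tens2LM (ωL + Φhat ωM) z) :=
  line_module_curvature_two_form_general rΩ2 rL tens2L h2Lmod rT2L hrT2L h2Lbal tensLT2 σL2 RL hRLl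
    hRLr hMorita tens2M RM tensLM hLMspan tens2LM j hj SL hSL RLM hRLM Φhat hΦ
end
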